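/- arXiv:2507.06515 — 6 statements merged into one kernel-verified Lean document; each statement's English description precedes it below -/
import Mathlib

section
/- Given n independent filters, where filter i has selectivity p_i ∈ [0,1] (probability of evaluating to True) and evaluation cost c_i > 0, and where the expected cost of executing them in order σ under conjunctive semantics (stop at first False) is C(σ) = Σ_{i=1}^{n} c_{σ(i)} · Π_{j<i} p_{σ(j)}, the order that sorts filters in descending order of (1 - p_i)/c_i minimizes C(σ) over all permutations σ. -/
/-- Expected cost of evaluating `n` filters with selectivities `p` and costs `c`
in the order given by permutation `σ`, under short-circuit conjunction. -/
def conjCost (n : ℕ) (p c : Fin n → ℝ) (σ : Equiv.Perm (Fin n)) : ℝ :=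
  ∑ i : Fin n, c (σ i) * ∏ j ∈ Finset.Iio i, p (σ j)

private lemma sum_eq_kk' {β : Type*} [AddCommMonoid β] {n : ℕ} (k k' : Fin n) (hne : k ≠ k')
    (g : Fin n → β) :
    ∑ i, g i = g k + g k' + ∑ i ∈ (Finset.univ.erase k').erase k, g i := by
  rw [← Finset.add_sum_erase _ g (Finset.mem_univ k'),
    ← Finset.add_sum_erase _ g (Finset.mem_erase.2 ⟨hne, Finset.mem_univ k⟩)]
  abel

private lemma prod_swap_Iio {n : ℕ} (f : Fin n → ℝ) (k k' : Fin n) (h : (k':ℕ) = (k:ℕ) + 1)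
    (i : Fin n) (hi : i ≠ k') :
    ∏ j ∈ Finset.Iio i, f (Equiv.swap k k' j) = ∏ j ∈ Finset.Iio i, f j := by
  by_cases hik : (i : ℕ) ≤ (k : ℕ)
  · apply Finset.prod_congr rfl
    intro j hj
    rw [Finset.mem_Iio, Fin.lt_def] at hj
    rw [Equiv.swap_apply_of_ne_of_ne]
    · intro hjk; rw [hjk] at hj; omega
    · intro hjk'; rw [hjk'] at hj; omega
  · apply Equiv.Perm.prod_comp
    intro x hx
    simp only [Set.mem_setOf_eq] at hx
    have hx' : x = k ∨ x = k' := by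
      by_contra hcon
      push_neg at hcon
      exact hx (Equiv.swap_apply_of_ne_of_ne hcon.1 hcon.2)
    have hik' : (k' : ℕ) < (i : ℕ) := by
      have : (i : ℕ) ≠ (k' : ℕ) := fun hh => hi (Fin.ext hh)
      omega
    rcases hx' with rfl | rfl <;>
      · simp only [Finset.coe_Iio, Set.mem_Iio, Fin.lt_def]
        omega

/-- The key lemma: with filters already sorted (as functions), identity is optimal. -/
private lemma key_lemma (n : ℕ) (p c : Fin n → ℝ)
    (hp : ∀ i, p i ∈ Set.Icc (0:ℝ) 1) (hc : ∀ i, 0 < c i)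
    (hsort : ∀ i j : Fin n, i ≤ j → c i * (1 - p j) ≤ c j * (1 - p i)) :
    ∀ τ : Equiv.Perm (Fin n), conjCost n p c 1 ≤ conjCost n p c τ := by
  suffices h : ∀ m : ℕ, ∀ τ : Equiv.Perm (Fin n),
      (∑ i : Fin n, (τ i : ℕ) * (n - (i : ℕ))) = m →
      conjCost n p c 1 ≤ conjCost n p c τ by
    intro τ; exact h _ τ rfl
  intro m
  induction m using Nat.strong_induction_on with
  | _ m IH =>
    intro τ hMτ
    by_cases hdesc : ∀ (k : ℕ) (hk : k + 1 < n),
        τ ⟨k, by omega⟩ < τ ⟨k + 1, hk⟩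
    · -- no descent: τ is strictly monotone hence the identity
      have claim : ∀ (d : ℕ) (i : Fin n) (h : (i:ℕ) + d + 1 < n),
          τ i < τ ⟨(i:ℕ) + d + 1, h⟩ := by
        intro d
        induction d with
        | zero =>
          intro i h
          have := hdesc (i : ℕ) (by omega)
          have hi : (⟨(i : ℕ), by omega⟩ : Fin n) = i := Fin.ext rfl
          rw [hi] at this
          convert this using 3
        | succ d ih =>
          intro i h
          have h1 : (i:ℕ) + d + 1 < n := by omega
          have step := hdesc ((i:ℕ) + d + 1) (by omega)
          refine lt_trans (ih i h1) ?_
          have e : (⟨(i:ℕ) + (d+1) + 1, h⟩ : Fin n) = ⟨(i:ℕ) + d + 1 + 1, by omega⟩ :=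
            Fin.ext rfl
          rw [e]
          exact step
      have hsm : StrictMono (τ : Fin n → Fin n) := by
        intro i j hij
        rw [Fin.lt_def] at hij
        have hd : (j : ℕ) = (i : ℕ) + ((j:ℕ) - (i:ℕ) - 1) + 1 := by omega
        have hlt : (i:ℕ) + ((j:ℕ) - (i:ℕ) - 1) + 1 < n := by
          have := j.isLt; omega
        have := claim ((j:ℕ) - (i:ℕ) - 1) i hlt
        have e : (⟨(i:ℕ) + ((j:ℕ) - (i:ℕ) - 1) + 1, hlt⟩ : Fin n) = j := by
          rw [Fin.ext_iff]
          simp only [Fin.val_mk]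
          omega
        rwa [e] at this
      have hτ1 : τ = 1 := by
        have hwf : WellFoundedLT (Fin n) := inferInstance
        have hfe : (τ : Fin n → Fin n) = id :=
          (StrictMono.range_inj (γ := Fin n) hsm strictMono_id).1
            (by rw [Equiv.range_eq_univ, Set.range_id])
        ext x
        have hx : τ x = x := by simpa using congrFun hfe x
        simp [hx]
      rw [hτ1]
    · push_neg at hdesc
      obtain ⟨k, hk, hdk⟩ := hdesc
      set kf : Fin n := ⟨k, by omega⟩ with hkf
      set k' : Fin n := ⟨k + 1, hk⟩ with hk'
      have hkk' : (k' : ℕ) = (kf : ℕ) + 1 := rfl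
      have hne : kf ≠ k' := by simp [hkf, hk', Fin.ext_iff]
      have hdk' : τ k' < τ kf := lt_of_le_of_ne hdk (fun hh => hne (τ.injective hh.symm))
      set τ' : Equiv.Perm (Fin n) := τ * Equiv.swap kf k' with hτ'
      have happ : ∀ i, τ' i = τ (Equiv.swap kf k' i) := fun i => rfl
      have happ_off : ∀ i, i ≠ kf → i ≠ k' → τ' i = τ i := by
        intro i h1 h2; rw [happ, Equiv.swap_apply_of_ne_of_ne h1 h2]
      have happk : τ' kf = τ k' := by rw [happ, Equiv.swap_apply_left]
      have happk' : τ' k' = τ kf := by rw [happ, Equiv.swap_apply_right]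
      have hvk : (kf : ℕ) = k := rfl
      have hvk' : (k' : ℕ) = k + 1 := rfl
      have hIio : Finset.Iio k' = insert kf (Finset.Iio kf) := by
        ext j
        simp only [Finset.mem_Iio, Finset.mem_insert, Fin.lt_def, Fin.ext_iff, hvk, hvk']
        omega
      have hknotin : kf ∉ Finset.Iio kf := by simp
      -- measure decreases
      have hMlt : (∑ i : Fin n, (τ' i : ℕ) * (n - (i : ℕ)))
          < ∑ i : Fin n, (τ i : ℕ) * (n - (i : ℕ)) := by
        rw [sum_eq_kk' kf k' hne (fun i => ((τ i : ℕ) * (n - (i : ℕ)))),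
          sum_eq_kk' kf k' hne (fun i => ((τ' i : ℕ) * (n - (i : ℕ))))]
        have hrest : ∑ i ∈ (Finset.univ.erase k').erase kf, (τ' i : ℕ) * (n - (i : ℕ))
            = ∑ i ∈ (Finset.univ.erase k').erase kf, (τ i : ℕ) * (n - (i : ℕ)) := by
          apply Finset.sum_congr rfl
          intro i hi
          rw [Finset.mem_erase, Finset.mem_erase] at hi
          rw [happ_off i hi.1 hi.2.1]
        rw [hrest, happk, happk', hvk, hvk']
        have ha : (τ k' : ℕ) < (τ kf : ℕ) := hdk'
        have hw : n - k = (n - (k + 1)) + 1 := by omega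
        rw [hw]
        ring_nf
        nlinarith [ha]
      -- cost does not increase
      have hcost : conjCost n p c τ' ≤ conjCost n p c τ := by
        unfold conjCost
        rw [sum_eq_kk' kf k' hne (fun i => c (τ i) * ∏ j ∈ Finset.Iio i, p (τ j)),
          sum_eq_kk' kf k' hne (fun i => c (τ' i) * ∏ j ∈ Finset.Iio i, p (τ' j))]
        have hrest : ∑ i ∈ (Finset.univ.erase k').erase kf, c (τ' i) * ∏ j ∈ Finset.Iio i, p (τ' j)
            = ∑ i ∈ (Finset.univ.erase k').erase kf, c (τ i) * ∏ j ∈ Finset.Iio i, p (τ j) := by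
          apply Finset.sum_congr rfl
          intro i hi
          rw [Finset.mem_erase, Finset.mem_erase] at hi
          rw [happ_off i hi.1 hi.2.1]
          congr 1
          have := prod_swap_Iio (fun x => p (τ x)) kf k' hkk' i hi.2.1
          simpa [happ] using this
        rw [hrest]
        apply add_le_add_left
        set P : ℝ := ∏ j ∈ Finset.Iio kf, p (τ j) with hP
        have hprodk : ∏ j ∈ Finset.Iio kf, p (τ' j) = P := by
          have := prod_swap_Iio (fun x => p (τ x)) kf k' hkk' kf hne
          simpa [happ] using this
        have hprodk'τ : ∏ j ∈ Finset.Iio k', p (τ j) = p (τ kf) * P := by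
          rw [hIio, Finset.prod_insert hknotin]
        have hprodk'τ' : ∏ j ∈ Finset.Iio k', p (τ' j) = p (τ k') * P := by
          rw [hIio, Finset.prod_insert hknotin, happk, hprodk]
        rw [happk, happk', hprodk, hprodk'τ, hprodk'τ']
        have hPnn : 0 ≤ P := Finset.prod_nonneg (fun j _ => (hp (τ j)).1)
        have hs := hsort (τ k') (τ kf) (le_of_lt hdk')
        nlinarith [mul_le_mul_of_nonneg_right hs hPnn]
      exact le_trans (IH _ (hMτ ▸ hMlt) τ' rfl) hcost

theorem stmt_0 (n : ℕ) (p c : Fin n → ℝ)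
    (hp : ∀ i, p i ∈ Set.Icc (0:ℝ) 1) (hc : ∀ i, 0 < c i)
    (σstar : Equiv.Perm (Fin n))
    (hsort : ∀ i j : Fin n, i ≤ j →
      (1 - p (σstar j)) / c (σstar j) ≤ (1 - p (σstar i)) / c (σstar i)) :
    ∀ σ : Equiv.Perm (Fin n), conjCost n p c σstar ≤ conjCost n p c σ := by
  intro σ
  set q : Fin n → ℝ := fun i => p (σstar i) with hq
  set d : Fin n → ℝ := fun i => c (σstar i) with hd
  have hq' : ∀ i, q i ∈ Set.Icc (0:ℝ) 1 := fun i => hp _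
  have hd' : ∀ i, 0 < d i := fun i => hc _
  have hsort' : ∀ i j : Fin n, i ≤ j → d i * (1 - q j) ≤ d j * (1 - q i) := by
    intro i j hij
    have := hsort i j hij
    rw [div_le_div_iff₀ (hc _) (hc _)] at this
    simpa [hq, hd, mul_comm] using this
  have hkey := key_lemma n q d hq' hd' hsort' (σstar⁻¹ * σ)
  have e1 : conjCost n q d 1 = conjCost n p c σstar := by
    unfold conjCost; simp [hq, hd]
  have e2 : conjCost n q d (σstar⁻¹ * σ) = conjCost n p c σ := by
    unfold conjCost
    apply Finset.sum_congr rfl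
    intro i _
    simp [hq, hd, Equiv.Perm.mul_apply]
  rw [e1, e2] at hkey
  exact hkey
end

section
/- For two adjacent filters in an execution order under conjunctive semantics, with selectivities p_1, p_2 ∈ [0,1] and costs c_1, c_2 > 0, placing filter 1 before filter 2 yields expected cost c_1 + p_1·c_2, and this is less than or equal to c_2 + p_2·c_1 (the cost of the swapped order) if and only if (1-p_1)/c_1 ≥ (1-p_2)/c_2. -/
theorem stmt_1 (p₁ p₂ c₁ c₂ : ℝ)
    (hp₁ : p₁ ∈ Set.Icc (0:ℝ) 1) (hp₂ : p₂ ∈ Set.Icc (0:ℝ) 1)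
    (hc₁ : 0 < c₁) (hc₂ : 0 < c₂) :
    c₁ + p₁ * c₂ ≤ c₂ + p₂ * c₁ ↔ (1 - p₂) / c₂ ≤ (1 - p₁) / c₁ := by
  rw [div_le_div_iff₀ hc₂ hc₁]
  constructor <;> intro h <;> nlinarith
end

section
/- Given n independent filters with selectivities p_i ∈ [0,1] and costs c_i > 0, where under disjunctive semantics (stop at first True) the expected cost of order σ is C(σ) = Σ_{i=1}^{n} c_{σ(i)} · Π_{j<i} (1 - p_{σ(j)}), the order sorting filters in descending order of p_i/c_i minimizes C(σ) over all permutations. -/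
/-- Expected cost of evaluating `n` filters with selectivities `p` and costs `c`
in the order given by permutation `σ`, under short-circuit disjunction. -/
def disjCost (n : ℕ) (p c : Fin n → ℝ) (σ : Equiv.Perm (Fin n)) : ℝ :=
  ∑ i : Fin n, c (σ i) * ∏ j ∈ Finset.Iio i, (1 - p (σ j))

section Aux

lemma disjCost_swap_le (n : ℕ) (p c : Fin n → ℝ)
    (hp : ∀ i, p i ∈ Set.Icc (0:ℝ) 1)
    (σ : Equiv.Perm (Fin n)) (a b : Fin n) (hab : (b:ℕ) = (a:ℕ) + 1)
    (hkey : p (σ a) * c (σ b) ≤ p (σ b) * c (σ a)) :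
    disjCost n p c (σ * Equiv.swap a b) ≤ disjCost n p c σ := by
  unfold disjCost
  set s := Equiv.swap a b with hs
  have hne : a ≠ b := by
    intro h; rw [h] at hab; omega
  have hlt : a < b := by rw [Fin.lt_def]; omega
  have hsa : s a = b := Equiv.swap_apply_left a b
  have hsb : s b = a := Equiv.swap_apply_right a b
  have hso : ∀ x : Fin n, x ≠ a → x ≠ b → s x = x := fun x h1 h2 =>
    Equiv.swap_apply_of_ne_of_ne h1 h2
  have hmul : ∀ x : Fin n, (σ * s) x = σ (s x) := fun x => rfl
  simp only [hmul]
  rw [← sub_nonneg, ← Finset.sum_sub_distrib]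
  have hzero : ∀ i ∈ Finset.univ, i ∉ ({a, b} : Finset (Fin n)) →
      c (σ i) * ∏ j ∈ Finset.Iio i, (1 - p (σ j)) -
        c (σ (s i)) * ∏ j ∈ Finset.Iio i, (1 - p (σ (s j))) = 0 := by
    intro i _ hi
    simp only [Finset.mem_insert, Finset.mem_singleton, not_or] at hi
    obtain ⟨hia, hib⟩ := hi
    rw [hso i hia hib]
    have hprod : ∏ j ∈ Finset.Iio i, (1 - p (σ (s j))) =
        ∏ j ∈ Finset.Iio i, (1 - p (σ j)) := by
      rcases lt_or_gt_of_ne (fun h => hia (Fin.ext h) : (i:ℕ) ≠ (a:ℕ)) with h | h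
      · refine Finset.prod_congr rfl fun j hj => ?_
        rw [Finset.mem_Iio, Fin.lt_def] at hj
        rw [hso j (by intro hh; rw [hh] at hj; omega)
            (by intro hh; rw [hh] at hj; omega)]
      · have hbi : (b:ℕ) < (i:ℕ) := by
          rcases Nat.lt_or_ge (b:ℕ) (i:ℕ) with h' | h'
          · exact h'
          · exfalso
            have : (i:ℕ) = (b:ℕ) := by omega
            exact hib (Fin.ext this)
        refine Finset.prod_nbij' (fun j => s j) (fun j => s j) ?_ ?_ ?_ ?_ ?_
        · intro j hj
          rw [Finset.mem_Iio] at hj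
          show s j ∈ Finset.Iio i
          rw [Finset.mem_Iio]
          by_cases h1 : j = a
          · rw [h1, hsa, Fin.lt_def]; omega
          · by_cases h2 : j = b
            · rw [h2, hsb, Fin.lt_def]; omega
            · rw [hso j h1 h2]; exact hj
        · intro j hj
          rw [Finset.mem_Iio] at hj
          show s j ∈ Finset.Iio i
          rw [Finset.mem_Iio]
          by_cases h1 : j = a
          · rw [h1, hsa, Fin.lt_def]; omega
          · by_cases h2 : j = b
            · rw [h2, hsb, Fin.lt_def]; omega
            · rw [hso j h1 h2]; exact hj
        · intro j _; show s (s j) = j; exact Equiv.swap_apply_self a b j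
        · intro j _; show s (s j) = j; exact Equiv.swap_apply_self a b j
        · intro j _; rfl
    rw [hprod]; ring
  rw [← Finset.sum_subset (Finset.subset_univ ({a, b} : Finset (Fin n))) hzero]
  rw [Finset.sum_pair hne]
  have hIa : ∀ j ∈ Finset.Iio a, s j = j := by
    intro j hj
    rw [Finset.mem_Iio, Fin.lt_def] at hj
    exact hso j (by intro hh; rw [hh] at hj; omega)
      (by intro hh; rw [hh] at hj; omega)
  have hA : ∏ j ∈ Finset.Iio a, (1 - p (σ (s j))) =
      ∏ j ∈ Finset.Iio a, (1 - p (σ j)) :=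
    Finset.prod_congr rfl fun j hj => by rw [hIa j hj]
  have hIb : Finset.Iio b = insert a (Finset.Iio a) := by
    ext j
    simp only [Finset.mem_Iio, Finset.mem_insert, Fin.lt_def, Fin.ext_iff]
    omega
  have hnotmem : a ∉ Finset.Iio a := by simp
  set A := ∏ j ∈ Finset.Iio a, (1 - p (σ j)) with hAdef
  have hB1 : ∏ j ∈ Finset.Iio b, (1 - p (σ j)) = (1 - p (σ a)) * A := by
    rw [hIb, Finset.prod_insert hnotmem]
  have hB2 : ∏ j ∈ Finset.Iio b, (1 - p (σ (s j))) = (1 - p (σ b)) * A := by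
    rw [hIb, Finset.prod_insert hnotmem, hsa, hA]
  rw [hsa, hsb, hA, hB1, hB2]
  have hAnn : 0 ≤ A := by
    refine Finset.prod_nonneg fun j _ => ?_
    have := (hp (σ j)).2; linarith
  have : c (σ a) * A - c (σ b) * A +
      (c (σ b) * ((1 - p (σ a)) * A) - c (σ a) * ((1 - p (σ b)) * A)) =
      A * (p (σ b) * c (σ a) - p (σ a) * c (σ b)) := by ring
  rw [this]
  exact mul_nonneg hAnn (by linarith)

/-- The set of inversions of a permutation of `Fin n`. -/
def invSet (n : ℕ) (τ : Equiv.Perm (Fin n)) : Finset (Fin n × Fin n) :=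
  Finset.univ.filter (fun x => x.1 < x.2 ∧ τ x.2 < τ x.1)

lemma eq_one_of_strictMono (n : ℕ) (τ : Equiv.Perm (Fin n))
    (hmono : StrictMono (τ : Fin n → Fin n)) : τ = 1 := by
  have hrange : Set.range (τ : Fin n → Fin n) = Set.range (id : Fin n → Fin n) := by
    rw [Set.range_id, Set.range_eq_univ.mpr τ.surjective]
  haveI : WellFoundedLT (Fin n) := inferInstance
  have := (StrictMono.range_inj (β := Fin n) (γ := Fin n) hmono strictMono_id).mp hrange
  exact Equiv.ext fun x => congrFun this x

lemma invSet_eq_zero (n : ℕ) (τ : Equiv.Perm (Fin n))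
    (h : (invSet n τ).card = 0) : τ = 1 := by
  have hempty := Finset.card_eq_zero.mp h
  refine eq_one_of_strictMono n τ ?_
  intro i j hij
  by_contra hcon
  have hne : τ i ≠ τ j := fun he => (ne_of_lt hij) (τ.injective he)
  have hlt : τ j < τ i := lt_of_le_of_ne (not_lt.mp hcon) hne.symm
  have : (i, j) ∈ invSet n τ := by
    simp only [invSet, Finset.mem_filter, Finset.mem_univ, true_and]
    exact ⟨hij, hlt⟩
  rw [hempty] at this
  exact absurd this (Finset.notMem_empty _)

lemma invSet_swap_lt (n : ℕ) (τ : Equiv.Perm (Fin n)) (a b : Fin n)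
    (hab : (b:ℕ) = (a:ℕ) + 1) (hdesc : τ b < τ a) :
    (invSet n (τ * Equiv.swap a b)).card < (invSet n τ).card := by
  set s := Equiv.swap a b with hs
  have hne : a ≠ b := by intro h; rw [h] at hab; omega
  have hlt : a < b := by rw [Fin.lt_def]; omega
  have hsa : s a = b := Equiv.swap_apply_left a b
  have hsb : s b = a := Equiv.swap_apply_right a b
  have hso : ∀ x : Fin n, x ≠ a → x ≠ b → s x = x := fun x h1 h2 =>
    Equiv.swap_apply_of_ne_of_ne h1 h2
  have hmem : (a, b) ∈ invSet n τ := by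
    simp only [invSet, Finset.mem_filter, Finset.mem_univ, true_and]
    exact ⟨hlt, hdesc⟩
  have hcard : (invSet n (τ * s)).card ≤ ((invSet n τ).erase (a, b)).card := by
    apply Finset.card_le_card_of_injOn (fun x => (s x.1, s x.2))
    · intro x hx
      simp only [Finset.mem_coe, invSet, Finset.mem_filter, Finset.mem_univ, true_and] at hx
      obtain ⟨hx1, hx2⟩ := hx
      have hx2' : τ (s x.2) < τ (s x.1) := hx2
      rw [Finset.mem_coe, Finset.mem_erase]
      constructor
      · intro hcon
        rw [Prod.ext_iff] at hcon
        obtain ⟨h1, h2⟩ := hcon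
        have e1 : x.1 = b := s.injective (by rw [hsb]; exact h1)
        have e2 : x.2 = a := s.injective (by rw [hsa]; exact h2)
        rw [e1, e2] at hx1
        exact absurd (hlt.trans hx1) (lt_irrefl a)
      · simp only [invSet, Finset.mem_filter, Finset.mem_univ, true_and]
        refine ⟨?_, hx2'⟩
        rw [Fin.lt_def] at hx1 ⊢
        by_cases h1 : x.1 = a
        · by_cases h2 : x.2 = b
          · exfalso
            rw [h1, h2, hsa, hsb] at hx2'
            exact absurd (hdesc.trans hx2') (lt_irrefl _)
          · have h2a : x.2 ≠ a := by
              intro hh; rw [h1, hh] at hx1; omega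
            rw [h1, hsa, hso x.2 h2a h2]
            have : (x.2 : ℕ) ≠ (b : ℕ) := fun hh => h2 (Fin.ext hh)
            rw [h1] at hx1; omega
        · by_cases h1b : x.1 = b
          · have h2a : x.2 ≠ a := by
              intro hh; rw [h1b, hh] at hx1; omega
            have h2b : x.2 ≠ b := by
              intro hh; rw [hh] at hx1; omega
            rw [h1b, hsb, hso x.2 h2a h2b]
            rw [h1b] at hx1; omega
          · rw [hso x.1 h1 h1b]
            by_cases h2 : x.2 = a
            · rw [h2, hsa]
              rw [h2] at hx1; omega
            · by_cases h2b : x.2 = b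
              · rw [h2b, hsb]
                have : (x.1 : ℕ) ≠ (a : ℕ) := fun hh => h1 (Fin.ext hh)
                rw [h2b] at hx1; omega
              · rw [hso x.2 h2 h2b]; omega
    · intro x _ y _ hxy
      rw [Prod.ext_iff] at hxy ⊢
      exact ⟨s.injective hxy.1, s.injective hxy.2⟩
  have hpos : 0 < (invSet n τ).card := Finset.card_pos.mpr ⟨(a, b), hmem⟩
  rw [Finset.card_erase_of_mem hmem] at hcard
  omega

lemma strictMono_of_no_descent (n : ℕ) (τ : Equiv.Perm (Fin n))
    (h : ∀ a b : Fin n, (b:ℕ) = (a:ℕ) + 1 → τ a < τ b) :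
    StrictMono (τ : Fin n → Fin n) := by
  have key : ∀ d : ℕ, ∀ i j : Fin n, (j:ℕ) = (i:ℕ) + d + 1 → τ i < τ j := by
    intro d
    induction d with
    | zero => intro i j hj; exact h i j (by omega)
    | succ d ih =>
      intro i j hj
      have hj' : (i:ℕ) + d + 1 < n := by have := j.isLt; omega
      exact (ih i ⟨(i:ℕ) + d + 1, hj'⟩ rfl).trans (h ⟨(i:ℕ) + d + 1, hj'⟩ j (by simp; omega))
  intro i j hij
  rw [Fin.lt_def] at hij
  exact key ((j:ℕ) - (i:ℕ) - 1) i j (by omega)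

end Aux

theorem stmt_2 (n : ℕ) (p c : Fin n → ℝ)
    (hp : ∀ i, p i ∈ Set.Icc (0:ℝ) 1) (hc : ∀ i, 0 < c i)
    (σstar : Equiv.Perm (Fin n))
    (hsort : ∀ i j : Fin n, i ≤ j →
      p (σstar j) / c (σstar j) ≤ p (σstar i) / c (σstar i)) :
    ∀ σ : Equiv.Perm (Fin n), disjCost n p c σstar ≤ disjCost n p c σ := by
  have key : ∀ N : ℕ, ∀ σ : Equiv.Perm (Fin n),
      (invSet n (σstar⁻¹ * σ)).card ≤ N →
      disjCost n p c σstar ≤ disjCost n p c σ := by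
    intro N
    induction N with
    | zero =>
      intro σ hσ
      have h1 : σstar⁻¹ * σ = 1 := invSet_eq_zero n _ (Nat.le_zero.mp hσ)
      rw [inv_mul_eq_one.mp h1]
    | succ N ih =>
      intro σ hσ
      set τ := σstar⁻¹ * σ with hτ
      by_cases hd : ∃ a b : Fin n, (b:ℕ) = (a:ℕ) + 1 ∧ τ b < τ a
      · obtain ⟨a, b, hab, hdesc⟩ := hd
        have hltc := invSet_swap_lt n τ a b hab hdesc
        have h1 : disjCost n p c σstar ≤ disjCost n p c (σ * Equiv.swap a b) := by
          apply ih
          have hτ' : σstar⁻¹ * (σ * Equiv.swap a b) = τ * Equiv.swap a b := by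
            rw [hτ, mul_assoc]
          rw [hτ']
          omega
        refine h1.trans ?_
        have happly : ∀ x : Fin n, σstar (τ x) = σ x := fun x => by
          rw [hτ]; simp [Equiv.Perm.mul_apply]
        have hratio : p (σ a) / c (σ a) ≤ p (σ b) / c (σ b) := by
          have := hsort (τ b) (τ a) (le_of_lt hdesc)
          rwa [happly, happly] at this
        have hkey : p (σ a) * c (σ b) ≤ p (σ b) * c (σ a) :=
          (div_le_div_iff₀ (hc _) (hc _)).mp hratio
        exact disjCost_swap_le n p c hp σ a b hab hkey
      · push_neg at hd
        have hmono : StrictMono (τ : Fin n → Fin n) := by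
          apply strictMono_of_no_descent
          intro a b hab
          have hne : a ≠ b := by intro h; rw [h] at hab; omega
          exact lt_of_le_of_ne (hd a b hab)
            (fun he => hne (τ.injective he))
        have h1 : τ = 1 := eq_one_of_strictMono n τ hmono
        rw [inv_mul_eq_one.mp h1]
  intro σ
  exact key _ σ le_rfl
end

section
/- Let a boolean expression tree T have root with children (sub-expressions) E₁,...,E_m combined by AND, where each sub-expression E_k has probability q_k of evaluating True and optimal expected cost C*(E_k) that is independent of the ordering of the other sub-expressions. Then the total expected cost under order σ, C(σ) = Σ_i C*(E_{σ(i)}) Π_{j<i} q_{σ(j)}, is minimized by sorting sub-expressions in descending order of (1 - q_k)/C*(E_k). -/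
namespace Stmt9aux

noncomputable def key (p : ℝ × ℝ) : ℝ := (1 - p.1) / p.2

def ok (p : ℝ × ℝ) : Prop := 0 ≤ p.1 ∧ p.1 ≤ 1 ∧ 0 < p.2

noncomputable def lcost : List (ℝ × ℝ) → ℝ
  | [] => 0
  | p :: l => p.2 + p.1 * lcost l

lemma swap_le {x y : ℝ × ℝ} (hx : ok x) (hy : ok y) (h : key x ≤ key y)
    (l : List (ℝ × ℝ)) : lcost (y :: x :: l) ≤ lcost (x :: y :: l) := by
  obtain ⟨hx0, hx1, hx2⟩ := hx
  obtain ⟨hy0, hy1, hy2⟩ := hy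
  have h' : (1 - x.1) * y.2 ≤ (1 - y.1) * x.2 :=
    (div_le_div_iff₀ hx2 hy2).mp h
  simp only [lcost]
  nlinarith

lemma bubble {y : ℝ × ℝ} (hy : ok y) :
    ∀ (a b : List (ℝ × ℝ)), (∀ x ∈ a, ok x) → (∀ x ∈ a, key x ≤ key y) →
      lcost (y :: (a ++ b)) ≤ lcost (a ++ y :: b)
  | [], b, _, _ => le_refl _
  | x :: a, b, hok, hkey => by
    have h1 : lcost (y :: (a ++ b)) ≤ lcost (a ++ y :: b) :=
      bubble hy a b (fun z hz => hok z (List.mem_cons_of_mem _ hz))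
        (fun z hz => hkey z (List.mem_cons_of_mem _ hz))
    have hxok := hok x (List.mem_cons_self)
    calc lcost (y :: (x :: a ++ b)) ≤ lcost (x :: y :: (a ++ b)) :=
          swap_le hxok hy (hkey x (List.mem_cons_self)) _
      _ ≤ lcost (x :: (a ++ y :: b)) := by
          simp only [lcost]
          exact add_le_add_right (mul_le_mul_of_nonneg_left h1 hxok.1) _
      _ = lcost (x :: a ++ y :: b) := rfl

lemma sorted_min : ∀ (l l' : List (ℝ × ℝ)),
    l.Pairwise (fun p r => key r ≤ key p) → List.Perm l' l → (∀ x ∈ l, ok x) →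
    lcost l ≤ lcost l'
  | [], l', _, hperm, _ => by
    simp [List.Perm.eq_nil (hperm), lcost]
  | y :: t, l', hsorted, hperm, hok => by
    have hy : y ∈ l' := hperm.symm.subset (List.mem_cons_self)
    obtain ⟨a, b, rfl⟩ := List.append_of_mem hy
    have hab : List.Perm (a ++ b) t := by
      have : List.Perm (y :: (a ++ b)) (y :: t) := List.perm_middle.symm.trans hperm
      exact (List.perm_cons y).mp this
    have hkey : ∀ x ∈ t, key x ≤ key y := fun x hx =>
      (List.pairwise_cons.mp hsorted).1 x hx
    have hokall : ∀ x ∈ a ++ y :: b, ok x := fun x hx =>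
      hok x (hperm.subset hx)
    have step1 : lcost (y :: (a ++ b)) ≤ lcost (a ++ y :: b) := by
      apply bubble (hok y (List.mem_cons_self))
      · intro x hx
        exact hokall x (List.mem_append_left _ hx)
      · intro x hx
        have hx' : x ∈ y :: t := hperm.subset (List.mem_append_left _ hx)
        rcases List.mem_cons.mp hx' with h | h
        · exact h ▸ le_refl _
        · exact hkey x h
    have hIH : lcost t ≤ lcost (a ++ b) :=
      sorted_min t (a ++ b) (List.pairwise_cons.mp hsorted).2 hab
        (fun x hx => hok x (List.mem_cons_of_mem _ hx))
    have hyok := hok y (List.mem_cons_self)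
    calc lcost (y :: t) = y.2 + y.1 * lcost t := rfl
      _ ≤ y.2 + y.1 * lcost (a ++ b) :=
          add_le_add_right (mul_le_mul_of_nonneg_left hIH hyok.1) _
      _ = lcost (y :: (a ++ b)) := rfl
      _ ≤ lcost (a ++ y :: b) := step1

lemma Iio_succ_eq (m : ℕ) (i : Fin m) :
    Finset.Iio (i.succ) =
      Finset.cons 0 ((Finset.Iio i).map ⟨Fin.succ, Fin.succ_injective m⟩)
        (by simp [Fin.succ_ne_zero]) := by
  ext j
  induction j using Fin.cases with
  | zero => simp [Fin.succ_pos]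
  | succ k => simp [Fin.succ_lt_succ_iff, Fin.succ_ne_zero]

lemma cost_ofFn : ∀ (m : ℕ) (g : Fin m → ℝ × ℝ),
    lcost (List.ofFn g) = ∑ i : Fin m, (g i).2 * ∏ j ∈ Finset.Iio i, (g j).1
  | 0, g => by simp [lcost]
  | m + 1, g => by
    rw [List.ofFn_succ]
    show (g 0).2 + (g 0).1 * lcost (List.ofFn (fun i => g i.succ)) = _
    rw [cost_ofFn m (fun i => g i.succ), Fin.sum_univ_succ]
    have h0 : Finset.Iio (0 : Fin (m + 1)) = ∅ := by
      ext j; simp [Fin.pos_iff_ne_zero]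
    simp only [Iio_succ_eq, Finset.prod_cons, Finset.prod_map,
      Function.Embedding.coeFn_mk, h0, Finset.prod_empty, mul_one]
    rw [Finset.mul_sum]
    exact congrArg₂ _ rfl (Finset.sum_congr rfl fun i _ => by ring)

end Stmt9aux


/-- Expected cost of evaluating `m` AND-combined sub-expressions with True
probabilities `q` and optimal expected costs `Cstar`, in the order `σ`,
under short-circuit conjunction. -/
def exprCost (m : ℕ) (q Cstar : Fin m → ℝ) (σ : Equiv.Perm (Fin m)) : ℝ :=
  ∑ i : Fin m, Cstar (σ i) * ∏ j ∈ Finset.Iio i, q (σ j)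

theorem stmt_9 (m : ℕ) (q Cstar : Fin m → ℝ)
    (hq : ∀ k, q k ∈ Set.Icc (0:ℝ) 1) (hC : ∀ k, 0 < Cstar k)
    (σstar : Equiv.Perm (Fin m))
    (hsort : ∀ i j : Fin m, i ≤ j →
      (1 - q (σstar j)) / Cstar (σstar j) ≤ (1 - q (σstar i)) / Cstar (σstar i)) :
    ∀ σ : Equiv.Perm (Fin m), exprCost m q Cstar σstar ≤ exprCost m q Cstar σ := by
  intro σ
  have key1 : ∀ τ : Equiv.Perm (Fin m),
      exprCost m q Cstar τ =
        Stmt9aux.lcost (List.ofFn (fun i => (q (τ i), Cstar (τ i)))) := by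
    intro τ
    rw [Stmt9aux.cost_ofFn]
    rfl
  rw [key1 σstar, key1 σ]
  apply Stmt9aux.sorted_min
  · rw [List.pairwise_ofFn]
    intro i j hij
    simpa [Stmt9aux.key] using hsort i j hij.le
  · exact (Equiv.Perm.ofFn_comp_perm σ fun i => (q i, Cstar i)).trans
      (Equiv.Perm.ofFn_comp_perm σstar fun i => (q i, Cstar i)).symm
  · intro x hx
    rw [List.mem_ofFn] at hx
    obtain ⟨i, rfl⟩ := hx
    exact ⟨(hq _).1, (hq _).2, hC _⟩
end

section
/- In the conjunctive filter ordering cost C(σ) = Σ_{i=1}^n c_{σ(i)} Π_{j<i} p_{σ(j)} with all p_i ∈ [0,1] and c_i > 0, every ordering's cost is bounded: min_i c_i ≤ C(σ) ≤ Σ_i c_i, and for the descending (1-p_i)/c_i order σ*, C(σ*) ≤ C(σ) for all σ, hence in particular C(σ*) ≤ (1/n!) Σ_σ C(σ) (the cost of the optimal order is at most the average cost over all orders). -/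
namespace ConjAux

open Finset Equiv

/-- The set of inversions of a permutation of `Fin n`. -/
def invs {n : ℕ} (π : Equiv.Perm (Fin n)) : Finset (Fin n × Fin n) :=
  Finset.univ.filter fun x => x.1 < x.2 ∧ π x.2 < π x.1

lemma perm_eq_one_of_strictMono {n : ℕ} {π : Equiv.Perm (Fin n)}
    (hsm : StrictMono (π : Fin n → Fin n)) : π = 1 := by
  have hr : Set.range (π : Fin n → Fin n) = Set.range (id : Fin n → Fin n) := by
    rw [π.surjective.range_eq, Set.range_id]
  have hwf : WellFoundedLT (Fin n) := inferInstance
  have := (@StrictMono.range_inj (Fin n) (Fin n) _ _ hwf (⇑π) id hsm strictMono_id).1 hr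
  exact Equiv.ext fun i => congrFun this i

lemma eq_one_of_invs_empty {n : ℕ} {π : Equiv.Perm (Fin n)} (h : invs π = ∅) : π = 1 := by
  have hno := Finset.filter_eq_empty_iff.mp h
  apply perm_eq_one_of_strictMono
  intro i j hij
  rcases lt_trichotomy (π i) (π j) with h' | h' | h'
  · exact h'
  · exact absurd (π.injective h') (ne_of_lt hij)
  · exact absurd ⟨hij, h'⟩ (hno (Finset.mem_univ (i, j)))

lemma invs_one {n : ℕ} : invs (1 : Equiv.Perm (Fin n)) = ∅ := by
  refine Finset.filter_eq_empty_iff.mpr fun x _ => ?_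
  rintro ⟨h1, h2⟩
  exact absurd h2 (not_lt.mpr h1.le)

lemma swap_lt_iff {n : ℕ} {a b : Fin n} (hab : (a : ℕ) + 1 = b)
    {i : Fin n} (hia : i ≠ a) (hib : i ≠ b) (j : Fin n) :
    j < i ↔ Equiv.swap a b j < i := by
  have hia' : (i : ℕ) ≠ a := fun h => hia (Fin.ext h)
  have hib' : (i : ℕ) ≠ b := fun h => hib (Fin.ext h)
  rcases eq_or_ne j a with rfl | hja
  · rw [Equiv.swap_apply_left, Fin.lt_def, Fin.lt_def]
    omega
  · rcases eq_or_ne j b with rfl | hjb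
    · rw [Equiv.swap_apply_right, Fin.lt_def, Fin.lt_def]
      omega
    · rw [Equiv.swap_apply_of_ne_of_ne hja hjb]

lemma Iio_eq_insert {n : ℕ} {a b : Fin n} (hab : (a : ℕ) + 1 = b) :
    Finset.Iio b = insert a (Finset.Iio a) := by
  ext j
  simp only [Finset.mem_Iio, Finset.mem_insert, Fin.lt_def, Fin.ext_iff]
  omega

lemma conjCost_swap {n : ℕ} (p c : Fin n → ℝ) (σ : Equiv.Perm (Fin n))
    {a b : Fin n} (hab : (a : ℕ) + 1 = b) :
    conjCost n p c (σ * Equiv.swap a b) = conjCost n p c σ +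
      (∏ j ∈ Finset.Iio a, p (σ j)) *
        (c (σ b) * (1 - p (σ a)) - c (σ a) * (1 - p (σ b))) := by
  have hab' : a < b := by rw [Fin.lt_def]; omega
  have hne : a ≠ b := ne_of_lt hab'
  set s : Equiv.Perm (Fin n) := Equiv.swap a b with hs
  set P : ℝ := ∏ j ∈ Finset.Iio a, p (σ j) with hP
  have hprod : ∀ i : Fin n, i ≠ a → i ≠ b →
      ∏ j ∈ Finset.Iio i, p (σ (s j)) = ∏ j ∈ Finset.Iio i, p (σ j) := by
    intro i hia hib
    refine Finset.prod_equiv (Equiv.swap a b) ?_ (fun j _ => rfl)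
    intro j
    simpa only [Finset.mem_Iio] using swap_lt_iff hab hia hib j
  have hprodA : ∏ j ∈ Finset.Iio a, p (σ (s j)) = P := by
    refine Finset.prod_congr rfl fun j hj => ?_
    rw [Finset.mem_Iio] at hj
    have hja : j ≠ a := ne_of_lt hj
    have hjb : j ≠ b := ne_of_lt (hj.trans hab')
    rw [hs, Equiv.swap_apply_of_ne_of_ne hja hjb]
  have hanotIio : a ∉ Finset.Iio a := by simp
  have hdiff : conjCost n p c (σ * s) - conjCost n p c σ =
      ∑ i : Fin n, (c (σ (s i)) * ∏ j ∈ Finset.Iio i, p (σ (s j))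
        - c (σ i) * ∏ j ∈ Finset.Iio i, p (σ j)) := by
    simp only [conjCost, Equiv.Perm.mul_apply, Finset.sum_sub_distrib]
  have hsplit : ∑ i : Fin n, (c (σ (s i)) * ∏ j ∈ Finset.Iio i, p (σ (s j))
        - c (σ i) * ∏ j ∈ Finset.Iio i, p (σ j)) =
      ∑ i ∈ ({a, b} : Finset (Fin n)), (c (σ (s i)) * ∏ j ∈ Finset.Iio i, p (σ (s j))
        - c (σ i) * ∏ j ∈ Finset.Iio i, p (σ j)) := by
    symm
    refine Finset.sum_subset (Finset.subset_univ _) ?_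
    intro x _ hx
    simp only [Finset.mem_insert, Finset.mem_singleton, not_or] at hx
    rw [hprod x hx.1 hx.2, hs, Equiv.swap_apply_of_ne_of_ne hx.1 hx.2, sub_self]
  have hterm_a : c (σ (s a)) * ∏ j ∈ Finset.Iio a, p (σ (s j))
      - c (σ a) * ∏ j ∈ Finset.Iio a, p (σ j) = c (σ b) * P - c (σ a) * P := by
    rw [hprodA, hs, Equiv.swap_apply_left, ← hP]
  have hprodBσ : ∏ j ∈ Finset.Iio b, p (σ j) = p (σ a) * P := by
    rw [Iio_eq_insert hab, Finset.prod_insert hanotIio]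
  have hprodBs : ∏ j ∈ Finset.Iio b, p (σ (s j)) = p (σ b) * P := by
    rw [Iio_eq_insert hab, Finset.prod_insert hanotIio, hprodA, hs, Equiv.swap_apply_left]
  have hterm_b : c (σ (s b)) * ∏ j ∈ Finset.Iio b, p (σ (s j))
      - c (σ b) * ∏ j ∈ Finset.Iio b, p (σ j)
      = c (σ a) * (p (σ b) * P) - c (σ b) * (p (σ a) * P) := by
    rw [hprodBσ, hprodBs, hs, Equiv.swap_apply_right]
  have : conjCost n p c (σ * s) - conjCost n p c σ =
      (c (σ b) * P - c (σ a) * P) + (c (σ a) * (p (σ b) * P) - c (σ b) * (p (σ a) * P)) := by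
    rw [hdiff, hsplit, Finset.sum_pair hne]
    rw [hterm_a, hterm_b]
  linear_combination this

lemma invs_swap_lt {n : ℕ} {π : Equiv.Perm (Fin n)} {a b : Fin n}
    (hab : (a : ℕ) + 1 = b) (hdesc : π b < π a) :
    (invs (π * Equiv.swap a b)).card < (invs π).card := by
  have hab' : a < b := by rw [Fin.lt_def]; omega
  have hmem_ab : (a, b) ∈ invs π := by
    simp only [invs, Finset.mem_filter, Finset.mem_univ, true_and]
    exact ⟨hab', hdesc⟩
  have h1 : (invs (π * Equiv.swap a b)).card ≤ ((invs π).erase (a, b)).card := by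
    apply Finset.card_le_card_of_injOn (fun x => (Equiv.swap a b x.1, Equiv.swap a b x.2))
    · rintro ⟨i, j⟩ hx
      replace hx := Finset.mem_filter.mp (show (i, j) ∈ invs (π * Equiv.swap a b) from hx)
      simp only [invs, Finset.mem_filter, Finset.mem_univ, true_and,
        Equiv.Perm.mul_apply] at hx
      obtain ⟨h12, hinv⟩ := hx
      have hne_pair : ¬(i = a ∧ j = b) := by
        rintro ⟨rfl, rfl⟩
        rw [Equiv.swap_apply_left, Equiv.swap_apply_right] at hinv
        exact absurd hinv (not_lt.mpr hdesc.le)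
      have hslt : Equiv.swap a b i < Equiv.swap a b j := by
        have h12' : (i : ℕ) < (j : ℕ) := h12
        by_cases hia : i = a
        · have hjb : j ≠ b := fun h => hne_pair ⟨hia, h⟩
          have hia' : (i : ℕ) = a := congrArg Fin.val hia
          have hja : j ≠ a := fun h => by
            have := congrArg Fin.val h; omega
          have hjb' : (j : ℕ) ≠ b := fun h => hjb (Fin.ext h)
          rw [hia, Equiv.swap_apply_left, Equiv.swap_apply_of_ne_of_ne hja hjb]
          rw [Fin.lt_def]
          omega
        · by_cases hib : i = b
          · have hib' : (i : ℕ) = b := congrArg Fin.val hib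
            have hja : j ≠ a := fun h => by
              have := congrArg Fin.val h; omega
            have hjb : j ≠ b := fun h => by
              have := congrArg Fin.val h; omega
            rw [hib, Equiv.swap_apply_right, Equiv.swap_apply_of_ne_of_ne hja hjb]
            rw [Fin.lt_def]
            omega
          · have hia' : (i : ℕ) ≠ a := fun h => hia (Fin.ext h)
            have hib' : (i : ℕ) ≠ b := fun h => hib (Fin.ext h)
            rw [Equiv.swap_apply_of_ne_of_ne hia hib]
            by_cases hja : j = a
            · have := congrArg Fin.val hja
              rw [hja, Equiv.swap_apply_left, Fin.lt_def]
              omega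
            · by_cases hjb : j = b
              · have := congrArg Fin.val hjb
                rw [hjb, Equiv.swap_apply_right, Fin.lt_def]
                omega
              · rw [Equiv.swap_apply_of_ne_of_ne hja hjb]
                exact h12
      refine Finset.mem_erase.mpr ⟨?_, ?_⟩
      · intro h
        have hi : Equiv.swap a b i = a := congrArg Prod.fst h
        have hj : Equiv.swap a b j = b := congrArg Prod.snd h
        have hi' : i = b := by
          have := congrArg (Equiv.swap a b) hi
          rwa [Equiv.swap_apply_self, Equiv.swap_apply_left] at this
        have hj' : j = a := by
          have := congrArg (Equiv.swap a b) hj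
          rwa [Equiv.swap_apply_self, Equiv.swap_apply_right] at this
        rw [hi', hj'] at h12
        exact absurd h12 (not_lt.mpr hab'.le)
      · simp only [invs, Finset.mem_filter, Finset.mem_univ, true_and]
        exact ⟨hslt, hinv⟩
    · rintro ⟨i, j⟩ _ ⟨i', j'⟩ _ h
      have h1 : Equiv.swap a b i = Equiv.swap a b i' := congrArg Prod.fst h
      have h2 : Equiv.swap a b j = Equiv.swap a b j' := congrArg Prod.snd h
      exact Prod.ext ((Equiv.swap a b).injective h1) ((Equiv.swap a b).injective h2)
  have h2 : ((invs π).erase (a, b)).card < (invs π).card :=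
    Finset.card_erase_lt_of_mem hmem_ab
  exact lt_of_le_of_lt h1 h2

lemma exists_descent {m : ℕ} {π : Equiv.Perm (Fin (m + 1))} (hne : π ≠ 1) :
    ∃ i : Fin m, π i.succ < π i.castSucc := by
  by_contra h
  push_neg at h
  have hmono : Monotone (π : Fin (m + 1) → Fin (m + 1)) := Fin.monotone_iff_le_succ.mpr h
  exact hne (perm_eq_one_of_strictMono (hmono.strictMono_of_injective π.injective))

end ConjAux

open ConjAux

theorem stmt_10 (n : ℕ) (hn : 0 < n) (p c : Fin n → ℝ)
    (hp : ∀ i, p i ∈ Set.Icc (0:ℝ) 1) (hc : ∀ i, 0 < c i)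
    (σstar : Equiv.Perm (Fin n))
    (hsort : ∀ i j : Fin n, i ≤ j →
      (1 - p (σstar j)) / c (σstar j) ≤ (1 - p (σstar i)) / c (σstar i)) :
    (∀ σ : Equiv.Perm (Fin n),
        Finset.univ.inf' (Finset.univ_nonempty_iff.mpr ⟨⟨0, hn⟩⟩) c ≤ conjCost n p c σ ∧
          conjCost n p c σ ≤ ∑ i, c i) ∧
      (∀ σ : Equiv.Perm (Fin n), conjCost n p c σstar ≤ conjCost n p c σ) ∧
      conjCost n p c σstar
        ≤ (∑ σ : Equiv.Perm (Fin n), conjCost n p c σ) / (Nat.factorial n) := by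
  have hp0 : ∀ i, 0 ≤ p i := fun i => (hp i).1
  have hp1 : ∀ i, p i ≤ 1 := fun i => (hp i).2
  -- bounds
  have hbounds : ∀ σ : Equiv.Perm (Fin n),
      Finset.univ.inf' (Finset.univ_nonempty_iff.mpr ⟨⟨0, hn⟩⟩) c ≤ conjCost n p c σ ∧
        conjCost n p c σ ≤ ∑ i, c i := by
    intro σ
    constructor
    · have hterm : ∀ i : Fin n, (0:ℝ) ≤ c (σ i) * ∏ j ∈ Finset.Iio i, p (σ j) :=
        fun i => mul_nonneg (hc _).le (Finset.prod_nonneg fun j _ => hp0 _)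
      have h0 : Finset.Iio (⟨0, hn⟩ : Fin n) = ∅ := by
        ext j; simp [Fin.lt_def]
      have h1 : Finset.univ.inf' (Finset.univ_nonempty_iff.mpr ⟨⟨0, hn⟩⟩) c
          ≤ c (σ ⟨0, hn⟩) * ∏ j ∈ Finset.Iio (⟨0, hn⟩ : Fin n), p (σ j) := by
        rw [h0, Finset.prod_empty, mul_one]
        exact Finset.inf'_le c (Finset.mem_univ _)
      exact h1.trans (Finset.single_le_sum (fun i _ => hterm i) (Finset.mem_univ _))
    · calc conjCost n p c σ ≤ ∑ i : Fin n, c (σ i) := by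
            refine Finset.sum_le_sum fun i _ => ?_
            have hle1 : ∏ j ∈ Finset.Iio i, p (σ j) ≤ 1 :=
              Finset.prod_le_one (fun j _ => hp0 _) (fun j _ => hp1 _)
            calc c (σ i) * ∏ j ∈ Finset.Iio i, p (σ j) ≤ c (σ i) * 1 :=
                  mul_le_mul_of_nonneg_left hle1 (hc _).le
              _ = c (σ i) := mul_one _
        _ = ∑ i, c i := Equiv.sum_comp σ c
  -- optimality
  have hopt : ∀ σ : Equiv.Perm (Fin n), conjCost n p c σstar ≤ conjCost n p c σ := by
    obtain ⟨m, rfl⟩ : ∃ m, n = m + 1 := ⟨n - 1, by omega⟩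
    have key : ∀ N : ℕ, ∀ σ : Equiv.Perm (Fin (m + 1)),
        (invs (σstar⁻¹ * σ)).card ≤ N →
        conjCost (m + 1) p c σstar ≤ conjCost (m + 1) p c σ := by
      intro N
      induction N with
      | zero =>
        intro σ hcard
        have hE : invs (σstar⁻¹ * σ) = ∅ := Finset.card_eq_zero.mp (Nat.le_zero.mp hcard)
        have h1 : σstar⁻¹ * σ = 1 := eq_one_of_invs_empty hE
        have : σstar = σ := by rwa [inv_mul_eq_one] at h1
        rw [this]
      | succ N ih =>
        intro σ hcard
        by_cases hE : invs (σstar⁻¹ * σ) = ∅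
        · have h1 : σstar⁻¹ * σ = 1 := eq_one_of_invs_empty hE
          have : σstar = σ := by rwa [inv_mul_eq_one] at h1
          rw [this]
        · set π : Equiv.Perm (Fin (m + 1)) := σstar⁻¹ * σ with hπ
          have hπne : π ≠ 1 := fun h => hE (h ▸ invs_one)
          obtain ⟨k, hk⟩ := exists_descent hπne
          set a : Fin (m + 1) := k.castSucc with ha
          set b : Fin (m + 1) := k.succ with hb
          have hab : (a : ℕ) + 1 = b := by simp [ha, hb]
          have hdesc : π b < π a := hk
          have hσa : σstar (π a) = σ a := by
            simp [hπ, Equiv.Perm.mul_apply]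
          have hσb : σstar (π b) = σ b := by
            simp [hπ, Equiv.Perm.mul_apply]
          have hkey : (1 - p (σ a)) / c (σ a) ≤ (1 - p (σ b)) / c (σ b) := by
            have := hsort (π b) (π a) hdesc.le
            rwa [hσa, hσb] at this
          have hkey' : (1 - p (σ a)) * c (σ b) ≤ (1 - p (σ b)) * c (σ a) :=
            (div_le_div_iff₀ (hc _) (hc _)).mp hkey
          have hP : (0:ℝ) ≤ ∏ j ∈ Finset.Iio a, p (σ j) :=
            Finset.prod_nonneg fun j _ => hp0 _
          have hD : c (σ b) * (1 - p (σ a)) - c (σ a) * (1 - p (σ b)) ≤ 0 := by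
            nlinarith
          have hle : conjCost (m + 1) p c (σ * Equiv.swap a b) ≤ conjCost (m + 1) p c σ := by
            rw [conjCost_swap p c σ hab]
            nlinarith [mul_nonpos_of_nonneg_of_nonpos hP hD]
          have hinveq : σstar⁻¹ * (σ * Equiv.swap a b) = π * Equiv.swap a b := by
            rw [hπ, mul_assoc]
          have hcard' : (invs (σstar⁻¹ * (σ * Equiv.swap a b))).card ≤ N := by
            rw [hinveq]
            have := invs_swap_lt hab hdesc
            omega
          exact (ih (σ * Equiv.swap a b) hcard').trans hle
    intro σ
    exact key (invs (σstar⁻¹ * σ)).card σ le_rfl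
  refine ⟨hbounds, hopt, ?_⟩
  have hfac : (0:ℝ) < (Nat.factorial n : ℝ) :=
    Nat.cast_pos.mpr (Nat.factorial_pos n)
  have hsum : (Nat.factorial n : ℝ) * conjCost n p c σstar
      ≤ ∑ σ : Equiv.Perm (Fin n), conjCost n p c σ := by
    calc (Nat.factorial n : ℝ) * conjCost n p c σstar
        = ∑ _σ : Equiv.Perm (Fin n), conjCost n p c σstar := by
          rw [Finset.sum_const, Finset.card_univ, nsmul_eq_mul, Fintype.card_perm,
            Fintype.card_fin]
      _ ≤ _ := Finset.sum_le_sum fun σ _ => hopt σ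
  rw [le_div_iff₀ hfac]
  linarith
end

section
/- For the disjunctive expected cost with SELECT-clause extraction, C(σ) = Σ_{i=1}^{n} c_{σ(i)} Π_{j<i} (1 - p_{σ(j)}) + S·(1 - Π_{i=1}^n (1 - p_i)), where S ≥ 0 is the cost of extracting SELECT attributes, the second term 1 - Π_i (1-p_i) is invariant under permutation; hence minimizing C(σ) over permutations is equivalent to minimizing the first term alone, which is achieved by sorting in descending order of p_i/c_i. -/
noncomputable def listCost : List (ℝ × ℝ) → ℝ
  | [] => 0
  | a :: t => a.2 + (1 - a.1) * listCost t

lemma Iio_succ_fin {n : ℕ} (i : Fin n) :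
    Finset.Iio (i.succ) = insert (0 : Fin (n+1)) ((Finset.Iio i).map (Fin.succEmb n)) := by
  ext j
  simp only [Finset.mem_Iio, Finset.mem_insert, Finset.mem_map, Fin.succEmb]
  constructor
  · intro hj
    rcases Fin.eq_zero_or_eq_succ j with h | ⟨k, rfl⟩
    · exact Or.inl h
    · exact Or.inr ⟨k, by simpa [Fin.succ_lt_succ_iff] using hj, rfl⟩
  · rintro (rfl | ⟨k, hk, rfl⟩)
    · exact Fin.succ_pos i
    · simpa [Fin.succ_lt_succ_iff] using hk

lemma sum_eq_listCost : ∀ (n : ℕ) (f : Fin n → ℝ × ℝ),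
    ∑ i : Fin n, (f i).2 * ∏ j ∈ Finset.Iio i, (1 - (f j).1) = listCost (List.ofFn f)
  | 0, f => by simp [listCost]
  | (n+1), f => by
    rw [List.ofFn_succ, Fin.sum_univ_succ]
    show _ = (f 0).2 + (1 - (f 0).1) * listCost (List.ofFn (fun i => f i.succ))
    rw [← sum_eq_listCost n (fun i => f i.succ)]
    rw [show (Finset.Iio (0 : Fin (n+1))) = ∅ from by ext j; simp [Fin.pos_iff_ne_zero]]
    congr 1
    · simp
    · rw [Finset.mul_sum]
      refine Finset.sum_congr rfl fun i _ => ?_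
      rw [Iio_succ_fin, Finset.prod_insert (by simp [Fin.succEmb, Fin.succ_ne_zero]), Finset.prod_map]
      simp [Fin.succEmb]
      ring

lemma listCost_swap (a b : ℝ × ℝ) (t : List (ℝ × ℝ)) (ha : 0 < a.2) (hb : 0 < b.2)
    (hr : b.1 / b.2 ≤ a.1 / a.2) :
    listCost (a :: b :: t) ≤ listCost (b :: a :: t) := by
  have h : b.1 * a.2 ≤ a.1 * b.2 := (div_le_div_iff₀ hb ha).mp hr
  simp only [listCost]
  nlinarith [h]

lemma listCost_mono (a : ℝ × ℝ) {X Y : List (ℝ × ℝ)} (ha : a.1 ≤ 1)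
    (h : listCost X ≤ listCost Y) : listCost (a :: X) ≤ listCost (a :: Y) := by
  simp only [listCost]
  nlinarith [h]

lemma listCost_move (a : ℝ × ℝ) (ha : 0 < a.2) (ha1 : a.1 ≤ 1) :
    ∀ (M₁ : List (ℝ × ℝ)) (M₂ : List (ℝ × ℝ)),
    (∀ x ∈ M₁, x.1 ≤ 1 ∧ 0 < x.2 ∧ x.1 / x.2 ≤ a.1 / a.2) →
    listCost (a :: (M₁ ++ M₂)) ≤ listCost (M₁ ++ a :: M₂)
  | [], M₂, _ => le_refl _
  | b :: M₁, M₂, h => by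
    have hb := h b (by simp)
    calc listCost (a :: (b :: M₁ ++ M₂)) = listCost (a :: b :: (M₁ ++ M₂)) := rfl
      _ ≤ listCost (b :: a :: (M₁ ++ M₂)) := listCost_swap a b _ ha hb.2.1 hb.2.2
      _ ≤ listCost (b :: (M₁ ++ a :: M₂)) :=
          listCost_mono b hb.1 (listCost_move a ha ha1 M₁ M₂ fun x hx => h x (by simp [hx]))
      _ = listCost ((b :: M₁) ++ a :: M₂) := rfl

lemma listCost_sorted_min : ∀ (L M : List (ℝ × ℝ)), L.Perm M →
    (∀ x ∈ L, x.1 ≤ 1 ∧ 0 < x.2) →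
    L.Pairwise (fun x y => y.1 / y.2 ≤ x.1 / x.2) →
    listCost L ≤ listCost M
  | [], M, hperm, _, _ => by
    rw [List.Perm.nil_eq hperm]
  | a :: L, M, hperm, hok, hsorted => by
    have haM : a ∈ M := hperm.mem_iff.mp (by simp)
    obtain ⟨M₁, M₂, rfl⟩ := List.append_of_mem haM
    have hperm' : L.Perm (M₁ ++ M₂) := by
      have : (a :: L).Perm (a :: (M₁ ++ M₂)) :=
        hperm.trans (List.perm_middle)
      exact this.cons_inv
    have ha := hok a (by simp)
    have hL : ∀ x ∈ L, x.1 ≤ 1 ∧ 0 < x.2 := fun x hx => hok x (by simp [hx])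
    have hmax : ∀ x ∈ L, x.1 / x.2 ≤ a.1 / a.2 := fun x hx =>
      (List.pairwise_cons.mp hsorted).1 x hx
    calc listCost (a :: L) ≤ listCost (a :: (M₁ ++ M₂)) :=
          listCost_mono a ha.1
            (listCost_sorted_min L (M₁ ++ M₂) hperm' hL (List.pairwise_cons.mp hsorted).2)
      _ ≤ listCost (M₁ ++ a :: M₂) := by
          refine listCost_move a ha.2 ha.1 M₁ M₂ fun x hx => ?_
          have hxL : x ∈ L := hperm'.mem_iff.mpr (by simp [hx])
          exact ⟨(hL x hxL).1, (hL x hxL).2, hmax x hxL⟩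

/-- Disjunctive expected cost including the SELECT-extraction term. -/
def disjFullCost (n : ℕ) (p c : Fin n → ℝ) (S : ℝ) (σ : Equiv.Perm (Fin n)) : ℝ :=
  disjCost n p c σ + S * (1 - ∏ i : Fin n, (1 - p (σ i)))

theorem stmt_13 (n : ℕ) (p c : Fin n → ℝ) (S : ℝ)
    (hp : ∀ i, p i ∈ Set.Icc (0:ℝ) 1) (hc : ∀ i, 0 < c i) (hS : 0 ≤ S)
    (σstar : Equiv.Perm (Fin n))
    (hsort : ∀ i j : Fin n, i ≤ j →
      p (σstar j) / c (σstar j) ≤ p (σstar i) / c (σstar i)) :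
    (∀ σ : Equiv.Perm (Fin n),
        S * (1 - ∏ i : Fin n, (1 - p (σ i))) = S * (1 - ∏ i : Fin n, (1 - p i))) ∧
      (∀ τ : Equiv.Perm (Fin n),
        (∀ σ, disjFullCost n p c S τ ≤ disjFullCost n p c S σ) ↔
          (∀ σ, disjCost n p c τ ≤ disjCost n p c σ)) ∧
      (∀ σ : Equiv.Perm (Fin n), disjFullCost n p c S σstar ≤ disjFullCost n p c S σ) := by
  have hprod : ∀ σ : Equiv.Perm (Fin n),
      (∏ i : Fin n, (1 - p (σ i))) = ∏ i : Fin n, (1 - p i) := fun σ =>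
    Equiv.prod_comp σ (fun i => 1 - p i)
  have hfull : ∀ σ : Equiv.Perm (Fin n),
      disjFullCost n p c S σ = disjCost n p c σ + S * (1 - ∏ i : Fin n, (1 - p i)) := by
    intro σ; unfold disjFullCost; rw [hprod σ]
  refine ⟨fun σ => by rw [hprod σ], fun τ => ?_, ?_⟩
  · constructor
    · intro h σ
      have := h σ
      rw [hfull τ, hfull σ] at this
      linarith
    · intro h σ
      rw [hfull τ, hfull σ]
      linarith [h σ]
  · -- optimality
    intro σ
    rw [hfull σstar, hfull σ]
    have key : disjCost n p c σstar ≤ disjCost n p c σ := by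
      set f : Fin n → ℝ × ℝ := fun k => (p k, c k) with hf
      have h1 : disjCost n p c σstar = listCost (List.ofFn (f ∘ σstar)) := by
        rw [← sum_eq_listCost]; rfl
      have h2 : disjCost n p c σ = listCost (List.ofFn (f ∘ σ)) := by
        rw [← sum_eq_listCost]; rfl
      rw [h1, h2]
      refine listCost_sorted_min _ _
        ((Equiv.Perm.ofFn_comp_perm σstar f).trans (Equiv.Perm.ofFn_comp_perm σ f).symm)
        ?_ ?_
      · intro x hx
        obtain ⟨i, rfl⟩ := List.mem_ofFn.mp hx
        exact ⟨(hp _).2, hc _⟩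
      · rw [List.pairwise_ofFn]
        intro i j hij
        exact hsort i j hij.le
    linarith
end
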